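/- arXiv:2510.12623 — 3 statements merged into one kernel-verified Lean document; each statement's English description precedes it below -/
import Mathlib

section
/- For all real x ≥ 0 and y, with P₀ = (x(1−2x), y(1−2x), y√(8x)) and P₁ = (x − x² − y², −y, 0) in ℝ³, one has ‖P₀ − P₁‖² = (x² + y²)² + 4y². -/
noncomputable def pt (a b c : ℝ) : EuclideanSpace ℝ (Fin 3) :=
  (WithLp.equiv 2 (Fin 3 → ℝ)).symm ![a, b, c]

theorem dist_P0_P1_sq (x y : ℝ) (hx : 0 ≤ x) :
    ‖pt (x * (1 - 2 * x)) (y * (1 - 2 * x)) (y * Real.sqrt (8 * x))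
        - pt (x - x ^ 2 - y ^ 2) (-y) 0‖ ^ 2
      = (x ^ 2 + y ^ 2) ^ 2 + 4 * y ^ 2 := by
  have hs : (Real.sqrt (8 * x)) ^ 2 = 8 * x := Real.sq_sqrt (by linarith)
  rw [EuclideanSpace.norm_eq]
  rw [Real.sq_sqrt (by positivity)]
  simp [pt, Fin.sum_univ_three, WithLp.equiv_symm_apply, PiLp.toLp_apply]
  ring_nf
  have h8 : (Real.sqrt 8) ^ 2 = 8 := Real.sq_sqrt (by norm_num)
  have hxx : (Real.sqrt x) ^ 2 = x := Real.sq_sqrt hx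
  have key : y ^ 2 * Real.sqrt 8 ^ 2 * Real.sqrt x ^ 2 = 8 * x * y ^ 2 := by
    rw [h8, hxx]; ring
  linarith
end

section
/- For all real x ≥ 0 and y, with P₀ = (x(1−2x), y(1−2x), y√(8x)) and P₃ = (3x − x² − y², y, 0) in ℝ³, one has ‖P₀ − P₃‖ = 2x + x² + y². -/
theorem pt_sub_pt (a b c a' b' c' : ℝ) :
    pt a b c - pt a' b' c' = pt (a - a') (b - b') (c - c') := by
  ext i
  fin_cases i <;> simp [pt]

theorem norm_pt (a b c : ℝ) : ‖pt a b c‖ = Real.sqrt (a ^ 2 + b ^ 2 + c ^ 2) := by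
  simp [EuclideanSpace.norm_eq, pt, Fin.sum_univ_three, add_assoc]

theorem dist_P0_P3 (x y : ℝ) (hx : 0 ≤ x) :
    ‖pt (x * (1 - 2 * x)) (y * (1 - 2 * x)) (y * Real.sqrt (8 * x))
        - pt (3 * x - x ^ 2 - y ^ 2) y 0‖
      = 2 * x + x ^ 2 + y ^ 2 := by
  have hsqrt : Real.sqrt (8 * x) ^ 2 = 8 * x := Real.sq_sqrt (by linarith)
  have hsum : (x * (1 - 2 * x) - (3 * x - x ^ 2 - y ^ 2)) ^ 2 + (y * (1 - 2 * x) - y) ^ 2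
      + (y * Real.sqrt (8 * x) - 0) ^ 2 = (2 * x + x ^ 2 + y ^ 2) ^ 2 := by
    -- with A = 2x + x² and B = y², the left side is (A - B)² + 4AB = (A + B)²
    linear_combination y ^ 2 * hsqrt
  rw [pt_sub_pt, norm_pt, hsum]
  exact Real.sqrt_sq (by positivity)
end

section
/- Let z = x + iy with x ≥ 0. Define the spatial triangle with vertices P₂ = (2x − x² − y², 0, 0), P₃ = P₂ + (x, y, 0), P₀ = (x(1−2x), y(1−2x), y√(8x)) in ℝ³, and the planar triangle with vertices Q₂ = 2x − x² − y², Q₃ = Q₂ + z, Q₀ = −2x² − 2y² + z in ℂ. Then the three corresponding pairwise distances agree: ‖P₂ − P₃‖ = |Q₂ − Q₃|, ‖P₂ − P₀‖ = |Q₂ − Q₀|, and ‖P₃ − P₀‖ = |Q₃ − Q₀|. Hence the two triangles are congruent. -/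
lemma norm_sub_pt (a b c a' b' c' : ℝ) :
    ‖pt a b c - pt a' b' c'‖ = Real.sqrt ((a-a')^2+(b-b')^2+(c-c')^2) := by
  rw [EuclideanSpace.norm_eq]
  simp [pt, Fin.sum_univ_three, sq_abs]

theorem triangle_congruence (x y : ℝ) (hx : 0 ≤ x) :
    ‖pt (2 * x - x ^ 2 - y ^ 2) 0 0 - pt (3 * x - x ^ 2 - y ^ 2) y 0‖
      = ‖((2 * x - x ^ 2 - y ^ 2 : ℂ)
          - ((2 * x - x ^ 2 - y ^ 2 : ℂ) + ((x:ℂ) + (y:ℂ) * Complex.I)))‖ ∧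
    ‖pt (2 * x - x ^ 2 - y ^ 2) 0 0
        - pt (x * (1 - 2 * x)) (y * (1 - 2 * x)) (y * Real.sqrt (8 * x))‖
      = ‖((2 * x - x ^ 2 - y ^ 2 : ℂ)
          - (-2 * (x:ℂ) ^ 2 - 2 * (y:ℂ) ^ 2 + ((x:ℂ) + (y:ℂ) * Complex.I)))‖ ∧
    ‖pt (3 * x - x ^ 2 - y ^ 2) y 0
        - pt (x * (1 - 2 * x)) (y * (1 - 2 * x)) (y * Real.sqrt (8 * x))‖
      = ‖(((2 * x - x ^ 2 - y ^ 2 : ℂ) + ((x:ℂ) + (y:ℂ) * Complex.I))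
          - (-2 * (x:ℂ) ^ 2 - 2 * (y:ℂ) ^ 2 + ((x:ℂ) + (y:ℂ) * Complex.I)))‖ := by
  have h8 : Real.sqrt (8 * x) ^ 2 = 8 * x := Real.sq_sqrt (by linarith)
  refine ⟨?_, ?_, ?_⟩ <;>
  · rw [norm_sub_pt, Complex.norm_def, Complex.normSq_apply]
    simp [Complex.sub_re, Complex.sub_im, Complex.add_re, Complex.add_im,
      Complex.mul_re, Complex.mul_im, ← Complex.ofReal_pow]
    congr 1
    have h8' : (Real.sqrt 8 * Real.sqrt x) ^ 2 = 8 * x := by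
      rw [mul_pow, Real.sq_sqrt (by norm_num : (0:ℝ) ≤ 8), Real.sq_sqrt hx]
    nlinarith [h8, h8']
end
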